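/- Let B = (G, β) be a bicolored graph, and let a, b, c be vertices with a, b ∈ N_G(c) and ab ∉ E(G). Then applying local inversions along the string w = cabababc (length 8) yields B_w = B^{{a,b}}; that is, the underlying graph is unchanged and exactly the colors of a and b are flipped. -/

import Mathlib

/-!
After the inversion at `c`, the vertices `a` and `b` are adjacent. For an edge `ab` the pivot
identity `B_aba = (B_bab)^{a,b}` holds, so `B_ababab = ((B_bab)_bab)^{a,b} = B^{a,b}`, since
local inversions are involutions and commute with recolourings. Conjugating by the inversion
at `c` then gives `B_cabababc = B^{a,b}`.
-/

open Classical

noncomputable section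

/-- The local complement of a simple graph `G` at a vertex `a`: adjacency is toggled
between every pair of distinct neighbors of `a`, all other adjacencies unchanged. -/
def localComp {V : Type*} (G : SimpleGraph V) (a : V) : SimpleGraph V where
  Adj x y := (G.Adj a x ∧ G.Adj a y ∧ x ≠ y ∧ ¬ G.Adj x y) ∨
             (G.Adj x y ∧ ¬ (G.Adj a x ∧ G.Adj a y))
  symm := by
    constructor
    intro x y h
    rcases h with ⟨hx, hy, hne, hna⟩ | ⟨h, hn⟩
    · exact Or.inl ⟨hy, hx, hne.symm, fun h' => hna h'.symm⟩
    · exact Or.inr ⟨h.symm, fun h' => hn ⟨h'.2, h'.1⟩⟩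
  loopless := by
    constructor
    intro x h
    rcases h with ⟨_, _, hne, _⟩ | ⟨h, _⟩
    · exact hne rfl
    · exact G.loopless.irrefl x h

/-- A bicolored graph: a simple graph together with a `{-1,1}`-coloring (units of ℤ). -/
abbrev Bicolored (V : Type*) := SimpleGraph V × (V → ℤˣ)

/-- Local inversion at a vertex `a`: locally complement the graph at `a` and flip
the colors of all neighbors of `a`. -/
def localInv {V : Type*} (B : Bicolored V) (a : V) : Bicolored V :=
  (localComp B.1 a, fun v => if B.1.Adj a v then - B.2 v else B.2 v)

/-- Sequential local inversion along a string (list) of vertices. -/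
def invSeq {V : Type*} (B : Bicolored V) (w : List V) : Bicolored V :=
  w.foldl localInv B

/-- `flipOn B S` keeps the underlying graph and flips the colors exactly on `S`. -/
def flipOn {V : Type*} (B : Bicolored V) (S : Set V) : Bicolored V :=
  (B.1, fun v => if v ∈ S then - B.2 v else B.2 v)

end

section LocalInversion

variable {V : Type*}

theorem localComp_adj {G : SimpleGraph V} {v x y : V} :
    (localComp G v).Adj x y ↔ (G.Adj v x ∧ G.Adj v y ∧ x ≠ y ∧ ¬ G.Adj x y) ∨
      (G.Adj x y ∧ ¬ (G.Adj v x ∧ G.Adj v y)) := Iff.rfl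

theorem localComp_adj_self {G : SimpleGraph V} {v x : V} :
    (localComp G v).Adj v x ↔ G.Adj v x := by
  simp [localComp_adj]

theorem localComp_adj_of_adj_of_adj {G : SimpleGraph V} {a b c : V} (hca : G.Adj c a)
    (hcb : G.Adj c b) (hne : a ≠ b) (hab : ¬ G.Adj a b) : (localComp G c).Adj a b :=
  Or.inl ⟨hca, hcb, hne, hab⟩

theorem localComp_localComp_self (G : SimpleGraph V) (v : V) :
    localComp (localComp G v) v = G := by
  ext x y
  rw [localComp_adj, localComp_adj_self, localComp_adj_self, localComp_adj]
  have : G.Adj x y → x ≠ y := G.ne_of_adj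
  tauto

theorem localComp_pivot {G : SimpleGraph V} {a b : V} (hab : G.Adj a b) :
    localComp (localComp (localComp G a) b) a = localComp (localComp (localComp G b) a) b := by
  ext x y
  simp only [localComp_adj, G.adj_comm b a, hab, G.loopless.irrefl]
  grind [SimpleGraph.Adj.ne, SimpleGraph.Adj.symm]

theorem localInv_localInv_self (B : Bicolored V) (v : V) : localInv (localInv B v) v = B := by
  ext1
  · exact localComp_localComp_self B.1 v
  · funext x
    by_cases h : B.1.Adj v x <;> simp [localInv, localComp_adj_self, h]

theorem localInv_flipOn (B : Bicolored V) (S : Set V) (v : V) :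
    localInv (flipOn B S) v = flipOn (localInv B v) S := by
  ext1
  · rfl
  · funext x
    by_cases h : B.1.Adj v x <;> by_cases hx : x ∈ S <;> simp [localInv, flipOn, h, hx]

theorem invSeq_cons (B : Bicolored V) (v : V) (w : List V) :
    invSeq B (v :: w) = invSeq (localInv B v) w := rfl

theorem invSeq_append (B : Bicolored V) (w w' : List V) :
    invSeq B (w ++ w') = invSeq (invSeq B w) w' :=
  List.foldl_append

theorem invSeq_flipOn (B : Bicolored V) (S : Set V) (w : List V) :
    invSeq (flipOn B S) w = flipOn (invSeq B w) S := by
  induction w generalizing B with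
  | nil => rfl
  | cons v w ih => rw [invSeq_cons, localInv_flipOn, ih, invSeq_cons]

theorem invSeq_invSeq_reverse (B : Bicolored V) (w : List V) :
    invSeq (invSeq B w) w.reverse = B := by
  induction w generalizing B with
  | nil => rfl
  | cons v w ih =>
    rw [List.reverse_cons, invSeq_append, invSeq_cons B, ih]
    exact localInv_localInv_self B v

theorem invSeq_pivot {B : Bicolored V} {a b : V} (hab : B.1.Adj a b) :
    invSeq B [a, b, a] = flipOn (invSeq B [b, a, b]) {a, b} := by
  ext1
  · exact localComp_pivot hab
  · funext x
    have hne := hab.ne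
    rcases eq_or_ne x a with rfl | hxa
    · simp [invSeq, localInv, flipOn, localComp_adj, hab, hab.symm, hne]
    rcases eq_or_ne x b with rfl | hxb
    · simp [invSeq, localInv, flipOn, localComp_adj, hab, hab.symm, hne]
    -- Off `{a, b}`, each string flips `x` once for each of `a, b` adjacent to `x`.
    by_cases hax : B.1.Adj a x <;> by_cases hbx : B.1.Adj b x <;>
      simp [invSeq, localInv, flipOn, localComp_adj, hab, hab.symm, hxa, hxb, hxa.symm, hxb.symm,
        hax, hbx]

theorem invSeq_ab_cube {B : Bicolored V} {a b : V} (hab : B.1.Adj a b) :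
    invSeq B [a, b, a, b, a, b] = flipOn B {a, b} := by
  calc invSeq B [a, b, a, b, a, b]
      = invSeq (invSeq B [a, b, a]) [b, a, b] := invSeq_append B [a, b, a] [b, a, b]
    _ = flipOn (invSeq (invSeq B [b, a, b]) [b, a, b]) {a, b} := by
      rw [invSeq_pivot hab, invSeq_flipOn]
    _ = flipOn B {a, b} := congrArg (flipOn · {a, b}) (invSeq_invSeq_reverse B [b, a, b])

end LocalInversion

/-- If `a, b` are nonadjacent neighbors of `c`, the string `cabababc` flips exactly
the colors of `a` and `b` and leaves the underlying graph unchanged. -/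
theorem stmt7 {V : Type*} (B : Bicolored V) (a b c : V) (hne : a ≠ b)
    (hca : B.1.Adj c a) (hcb : B.1.Adj c b) (hab : ¬ B.1.Adj a b) :
    invSeq B [c, a, b, a, b, a, b, c] = flipOn B {a, b} := by
  have hadj : (localInv B c).1.Adj a b := localComp_adj_of_adj_of_adj hca hcb hne hab
  calc invSeq B [c, a, b, a, b, a, b, c]
      = localInv (invSeq (localInv B c) [a, b, a, b, a, b]) c := rfl
    _ = flipOn B {a, b} := by
      rw [invSeq_ab_cube hadj, localInv_flipOn, localInv_localInv_self]
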